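/- arXiv:1301.6349 — 3 statements merged into one kernel-verified Lean document; each statement's English description precedes it below -/
import Mathlib

section
/- Up to isomorphism there are exactly two nilpotent Jordan algebras of dimension 2 over any field K: the 2-dimensional algebra with all products zero, and the algebra with basis {a, b} and a² = b, all other products zero. -/
/-- A map `f : M → M → N` is `K`-bilinear. -/
def IsBilin (K : Type*) [Field K] {M N : Type*} [AddCommGroup M] [Module K M]
    [AddCommGroup N] [Module K N] (f : M → M → N) : Prop :=
  (∀ x x' y, f (x + x') y = f x y + f x' y) ∧
  (∀ x y y', f x (y + y') = f x y + f x y') ∧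
  (∀ (a : K) (x y), f (a • x) y = a • f x y) ∧
  (∀ (a : K) (x y), f x (a • y) = a • f x y)

/-- `mul` makes `M` into a Jordan algebra over `K`: a commutative bilinear product
satisfying the Jordan identity `x² ∘ (x ∘ y) = x ∘ (x² ∘ y)`. -/
def IsJordanAlg (K : Type*) [Field K] {M : Type*} [AddCommGroup M] [Module K M]
    (mul : M → M → M) : Prop :=
  IsBilin K mul ∧ (∀ x y, mul x y = mul y x) ∧
  ∀ x y, mul (mul x x) (mul x y) = mul x (mul (mul x x) y)

/-- A Jordan 2-cocycle from `(M, mul)` to `V`. -/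
def IsJCocycle (K : Type*) [Field K] {M V : Type*} [AddCommGroup M] [Module K M]
    [AddCommGroup V] [Module K V] (mul : M → M → M) (θ : M → M → V) : Prop :=
  IsBilin K θ ∧ (∀ x y, θ x y = θ y x) ∧
  ∀ x y, θ (mul x x) (mul x y) = θ x (mul (mul x x) y)

/-- Lower central series: `lcs K mul 0 = c¹(J) = J`, `lcs K mul (n+1) = c^{n+2}(J) = c^{n+1}(J) ∘ J`. -/
def lcs (K : Type*) [Field K] {M : Type*} [AddCommGroup M] [Module K M]
    (mul : M → M → M) : ℕ → Submodule K M
  | 0 => ⊤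
  | n + 1 => Submodule.span K {z | ∃ x, x ∈ lcs K mul n ∧ ∃ y, z = mul x y}

/-- A Jordan algebra is nilpotent if its lower central series reaches zero. -/
def IsNilpotentAlg (K : Type*) [Field K] {M : Type*} [AddCommGroup M] [Module K M]
    (mul : M → M → M) : Prop :=
  ∃ n, lcs K mul n = ⊥

/-- Isomorphism of (Jordan) algebras. -/
def JIso (K : Type*) [Field K] {M N : Type*} [AddCommGroup M] [Module K M]
    [AddCommGroup N] [Module K N] (mul1 : M → M → M) (mul2 : N → N → N) : Prop :=
  ∃ e : M ≃ₗ[K] N, ∀ x y, e (mul1 x y) = mul2 (e x) (e y)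

/-- Central extension product on `M × V` induced by `θ`. -/
def extMul (K : Type*) [Field K] {M V : Type*} [AddCommGroup M] [Module K M]
    [AddCommGroup V] [Module K V] (mul : M → M → M) (θ : M → M → V) :
    M × V → M × V → M × V :=
  fun p q => (mul p.1 q.1, θ p.1 q.1)

/-- The 2-dimensional algebra with all products zero. -/
def mulA (K : Type*) [Field K] : (K × K) → (K × K) → (K × K) := fun _ _ => 0

/-- The 2-dimensional algebra with basis `{a, b}` and `a² = b`, other products zero. -/
def mulB (K : Type*) [Field K] : (K × K) → (K × K) → (K × K) := fun x y => (0, x.1 * y.1)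

/-!
A nilpotent algebra of dimension `d` has `c^{d+1} = 0`, since the lower central series strictly
decreases until it vanishes. In dimension 2 this gives `J² ≠ J` and `J² ∘ J = 0`. If `J² = 0` the
product is zero. Otherwise pick `a ∉ J²`; together with a nonzero `b ∈ J²` it forms a basis, and
since `b` annihilates everything, `x ∘ y = x_a y_a (a ∘ a)`. Hence `a ∘ a ≠ 0`, and in the basis
`{a, a ∘ a}` the product is that of `mulB`.
-/

section LowerCentralSeries

variable {K : Type*} [Field K] {M : Type*} [AddCommGroup M] [Module K M] {mul : M → M → M}

lemma lcs_succ (n : ℕ) : lcs K mul (n + 1) =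
    Submodule.span K {z | ∃ x, x ∈ lcs K mul n ∧ ∃ y, z = mul x y} := rfl

lemma mul_mem_lcs_succ {x : M} {n : ℕ} (hx : x ∈ lcs K mul n) (y : M) :
    mul x y ∈ lcs K mul (n + 1) :=
  Submodule.subset_span ⟨x, hx, y, rfl⟩

lemma lcs_succ_le (n : ℕ) : lcs K mul (n + 1) ≤ lcs K mul n := by
  induction n with
  | zero => exact le_top
  | succ n ih =>
    refine Submodule.span_le.2 ?_
    rintro _ ⟨x, hx, y, rfl⟩
    exact mul_mem_lcs_succ (ih hx) y

lemma antitone_lcs : Antitone (lcs K mul) :=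
  antitone_nat_of_succ_le lcs_succ_le

lemma lcs_add_eq_of_succ_eq {n : ℕ} (h : lcs K mul (n + 1) = lcs K mul n) (m : ℕ) :
    lcs K mul (n + m) = lcs K mul n := by
  induction m with
  | zero => rfl
  | succ m ih => rw [← Nat.add_assoc, lcs_succ, ih, ← lcs_succ, h]

lemma lcs_succ_lt_of_ne_bot (hnil : IsNilpotentAlg K mul) {n : ℕ} (hn : lcs K mul n ≠ ⊥) :
    lcs K mul (n + 1) < lcs K mul n := by
  refine lt_of_le_of_ne (lcs_succ_le n) fun h => hn ?_
  obtain ⟨N, hN⟩ := hnil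
  rcases le_total N n with hNn | hnN
  · exact eq_bot_iff.2 (hN ▸ antitone_lcs hNn)
  · rw [← lcs_add_eq_of_succ_eq h (N - n), Nat.add_sub_cancel' hnN, hN]

lemma lcs_eq_bot_or_finrank_add_le [FiniteDimensional K M] (hnil : IsNilpotentAlg K mul)
    (n : ℕ) : lcs K mul n = ⊥ ∨ Module.finrank K (lcs K mul n) + n ≤ Module.finrank K M := by
  induction n with
  | zero => exact Or.inr (Submodule.finrank_le _)
  | succ n ih =>
    by_cases hn : lcs K mul n = ⊥
    · exact Or.inl (eq_bot_iff.2 (hn ▸ lcs_succ_le n))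
    · have hlt := Submodule.finrank_lt_finrank_of_lt (lcs_succ_lt_of_ne_bot hnil hn)
      have hle := ih.resolve_left hn
      exact Or.inr (by omega)

lemma lcs_finrank_eq_bot [FiniteDimensional K M] (hnil : IsNilpotentAlg K mul) :
    lcs K mul (Module.finrank K M) = ⊥ := by
  refine (lcs_eq_bot_or_finrank_add_le hnil _).elim id fun h => ?_
  exact Submodule.finrank_eq_zero.1 (by omega)

lemma mul_eq_zero_of_lcs_succ_eq_bot {n : ℕ} (h : lcs K mul (n + 1) = ⊥) {x : M}
    (hx : x ∈ lcs K mul n) (y : M) : mul x y = 0 := by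
  simpa [h] using mul_mem_lcs_succ (mul := mul) hx y

end LowerCentralSeries

section DimensionTwo

variable {K : Type*} [Field K] {M : Type*} [AddCommGroup M] [Module K M] {mul : M → M → M}

lemma exists_basis_fin_two_of_notMem_of_mem (hdim : Module.finrank K M = 2)
    {P : Submodule K M} {a b : M} (ha : a ∉ P) (hb : b ∈ P) (hb0 : b ≠ 0) :
    ∃ v : Module.Basis (Fin 2) K M, v 0 = a ∧ v 1 = b := by
  have hli : LinearIndependent K ![a, b] :=
    linearIndependent_fin2.2 ⟨hb0, fun c hc => ha <| by
      simp only [Matrix.cons_val_one, Matrix.cons_val_zero] at hc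
      exact hc ▸ P.smul_mem c hb⟩
  refine ⟨basisOfLinearIndependentOfCardEqFinrank hli (by simp [hdim]), ?_, ?_⟩ <;> simp

lemma IsBilin.mul_eq_smul_of_basis (hbil : IsBilin K mul) (hcomm : ∀ x y, mul x y = mul y x)
    (v : Module.Basis (Fin 2) K M) (hv : ∀ w, mul (v 1) w = 0) (x y : M) :
    mul x y = (v.repr x 0 * v.repr y 0) • mul (v 0) (v 0) := by
  obtain ⟨hl, hr, hsl, hsr⟩ := hbil
  have hx := v.sum_repr x
  have hy := v.sum_repr y
  rw [Fin.sum_univ_two] at hx hy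
  conv_lhs => rw [← hx, ← hy]
  rw [hl, hsl, hsl, hv, smul_zero, add_zero, hr, hsr, hsr, hcomm (v 0) (v 1), hv, smul_zero,
    add_zero, smul_smul]

lemma jIso_mulA_of_mul_eq_zero (hdim : Module.finrank K M = 2) (h : ∀ x y, mul x y = 0) :
    JIso K mul (mulA K) := by
  have : FiniteDimensional K M := .of_finrank_pos (by omega)
  obtain ⟨e⟩ := FiniteDimensional.nonempty_linearEquiv_of_finrank_eq
    (M := M) (M' := K × K) (by rw [hdim]; simp)
  exact ⟨e, fun x y => by rw [h, map_zero]; rfl⟩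

lemma jIso_mulB_of_basis (hbil : IsBilin K mul) (hcomm : ∀ x y, mul x y = mul y x)
    (v : Module.Basis (Fin 2) K M) (hv : ∀ w, mul (v 1) w = 0) (hsq : mul (v 0) (v 0) = v 1) :
    JIso K mul (mulB K) := by
  let e : M ≃ₗ[K] K × K := v.equivFun.trans (LinearEquiv.finTwoArrow K K)
  have he : ∀ x, e x = (v.repr x 0, v.repr x 1) := fun x => rfl
  refine ⟨e, fun x y => ?_⟩
  rw [hbil.mul_eq_smul_of_basis hcomm v hv, hsq, map_smul, he, he x, he y]
  simp [mulB]

end DimensionTwo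

theorem isJordanAlg_mulA (K : Type*) [Field K] : IsJordanAlg K (mulA K) := by
  refine ⟨⟨?_, ?_, ?_, ?_⟩, ?_, ?_⟩ <;> intros <;> simp [mulA]

theorem isNilpotentAlg_mulA (K : Type*) [Field K] : IsNilpotentAlg K (mulA K) :=
  ⟨1, eq_bot_iff.2 <| Submodule.span_le.2 <| by rintro _ ⟨x, -, y, rfl⟩; simp [mulA]⟩

theorem isJordanAlg_mulB (K : Type*) [Field K] : IsJordanAlg K (mulB K) := by
  refine ⟨⟨?_, ?_, ?_, ?_⟩, ?_, ?_⟩ <;> intros <;> ext <;> simp [mulB] <;> ring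

theorem isNilpotentAlg_mulB (K : Type*) [Field K] : IsNilpotentAlg K (mulB K) := by
  have h1 : lcs K (mulB K) 1 ≤ LinearMap.ker (LinearMap.fst K K K) :=
    Submodule.span_le.2 <| by rintro _ ⟨x, -, y, rfl⟩; simp [mulB]
  refine ⟨2, eq_bot_iff.2 <| Submodule.span_le.2 ?_⟩
  rintro _ ⟨x, hx, y, rfl⟩
  have hx1 : x.1 = 0 := h1 hx
  simp [mulB, hx1]

theorem not_jIso_mulA_mulB (K : Type*) [Field K] : ¬ JIso K (mulA K) (mulB K) := by
  rintro ⟨e, he⟩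
  simpa [mulA, mulB, Prod.ext_iff] using he (e.symm (1, 0)) (e.symm (1, 0))

theorem jIso_mulA_or_jIso_mulB {K : Type*} [Field K] {M : Type*} [AddCommGroup M] [Module K M]
    {mul : M → M → M} (hdim : Module.finrank K M = 2) (hbil : IsBilin K mul)
    (hcomm : ∀ x y, mul x y = mul y x) (hnil : IsNilpotentAlg K mul) :
    JIso K mul (mulA K) ∨ JIso K mul (mulB K) := by
  have : FiniteDimensional K M := .of_finrank_pos (by omega)
  have hcube : lcs K mul 2 = ⊥ := hdim ▸ lcs_finrank_eq_bot hnil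
  by_cases hsq : lcs K mul 1 = ⊥
  · exact .inl <| jIso_mulA_of_mul_eq_zero hdim fun x =>
      mul_eq_zero_of_lcs_succ_eq_bot (n := 0) hsq Submodule.mem_top
  have : Nontrivial M := Module.nontrivial_of_finrank_eq_succ hdim
  obtain ⟨a, -, ha⟩ := SetLike.exists_of_lt (lcs_succ_lt_of_ne_bot hnil (n := 0) top_ne_bot)
  obtain ⟨b, hb, hb0⟩ := (Submodule.ne_bot_iff _).1 hsq
  obtain ⟨v, rfl, rfl⟩ := exists_basis_fin_two_of_notMem_of_mem hdim ha hb hb0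
  have hv := mul_eq_zero_of_lcs_succ_eq_bot hcube hb
  have haa : mul (v 0) (v 0) ≠ 0 := fun h0 => hsq <| eq_bot_iff.2 <| Submodule.span_le.2 <| by
    rintro _ ⟨x, -, y, rfl⟩
    simp [hbil.mul_eq_smul_of_basis hcomm v hv x y, h0]
  have haa_mem : mul (v 0) (v 0) ∈ lcs K mul 1 := mul_mem_lcs_succ (n := 0) Submodule.mem_top _
  obtain ⟨w, hw0, hw1⟩ := exists_basis_fin_two_of_notMem_of_mem hdim ha haa_mem haa
  refine .inr <| jIso_mulB_of_basis hbil hcomm w ?_ (by rw [hw0, hw1])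
  exact hw1 ▸ mul_eq_zero_of_lcs_succ_eq_bot hcube haa_mem

/-- up to isomorphism there are exactly two nilpotent Jordan algebras of
dimension 2 over any field `K`: the zero-product algebra and the algebra with `a² = b`. -/
theorem stmt10 (K : Type*) [Field K] :
    IsJordanAlg K (mulA K) ∧ IsNilpotentAlg K (mulA K) ∧
    IsJordanAlg K (mulB K) ∧ IsNilpotentAlg K (mulB K) ∧
    ¬ JIso K (mulA K) (mulB K) ∧
    ∀ (M : Type*) [AddCommGroup M] [Module K M] (mul : M → M → M),
      Module.finrank K M = 2 → IsJordanAlg K mul → IsNilpotentAlg K mul →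
      (JIso K mul (mulA K) ∨ JIso K mul (mulB K)) :=
  ⟨isJordanAlg_mulA K, isNilpotentAlg_mulA K, isJordanAlg_mulB K, isNilpotentAlg_mulB K,
    not_jIso_mulA_mulB K, fun _ _ _ _ hdim hJ hnil => jIso_mulA_or_jIso_mulB hdim hJ.1 hJ.2.1 hnil⟩
end

section
/- Over the real numbers ℝ, the two 3-dimensional Jordan algebras J⁺ with a² = c, b² = c and J⁻ with a² = c, b² = −c (all other basis products zero) are not isomorphic. -/
/-- 3-dim real algebra `J⁺`: `a² = c`, `b² = c`. -/
def mP : (Fin 3 → ℝ) → (Fin 3 → ℝ) → (Fin 3 → ℝ) :=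
  fun x y => ![0, 0, x 0 * y 0 + x 1 * y 1]

/-- 3-dim real algebra `J⁻`: `a² = c`, `b² = -c`. -/
def mN : (Fin 3 → ℝ) → (Fin 3 → ℝ) → (Fin 3 → ℝ) :=
  fun x y => ![0, 0, x 0 * y 0 - x 1 * y 1]

/-- over ℝ the Jordan algebras `J⁺` (`a²=c, b²=c`) and `J⁻` (`a²=c, b²=-c`)
are not isomorphic. -/
theorem stmt15 :
    IsJordanAlg ℝ mP ∧ IsJordanAlg ℝ mN ∧ ¬ JIso ℝ mP mN := by
  refine ⟨⟨⟨?_, ?_, ?_, ?_⟩, ?_, ?_⟩, ⟨⟨?_, ?_, ?_, ?_⟩, ?_, ?_⟩, ?_⟩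
  case _ => intro x x' y; funext i; fin_cases i <;> simp [mP] <;> ring
  case _ => intro x y y'; funext i; fin_cases i <;> simp [mP] <;> ring
  case _ => intro a x y; funext i; fin_cases i <;> simp [mP] <;> ring
  case _ => intro a x y; funext i; fin_cases i <;> simp [mP] <;> ring
  case _ => intro x y; funext i; fin_cases i <;> simp [mP] <;> ring
  case _ => intro x y; funext i; fin_cases i <;> simp [mP] <;> ring
  case _ => intro x x' y; funext i; fin_cases i <;> simp [mN] <;> ring
  case _ => intro x y y'; funext i; fin_cases i <;> simp [mN] <;> ring
  case _ => intro a x y; funext i; fin_cases i <;> simp [mN] <;> ring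
  case _ => intro a x y; funext i; fin_cases i <;> simp [mN] <;> ring
  case _ => intro x y; funext i; fin_cases i <;> simp [mN] <;> ring
  case _ => intro x y; funext i; fin_cases i <;> simp [mN] <;> ring
  rintro ⟨e, he⟩
  set v : Fin 3 → ℝ := ![0, 0, 1] with hv
  set c : ℝ := e v 2 with hc
  -- key identity
  have key : ∀ x : Fin 3 → ℝ,
      e x 0 * e x 0 - e x 1 * e x 1 = (x 0 ^ 2 + x 1 ^ 2) * c := by
    intro x
    have h1 : mP x x = (x 0 ^ 2 + x 1 ^ 2) • v := by
      funext i; fin_cases i <;> simp [mP, hv] <;> ring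
    have h2 := he x x
    rw [h1, map_smul] at h2
    have h3 := congrFun h2 2
    simp [mN, Pi.smul_apply, smul_eq_mul] at h3
    linarith
  -- e v has zero coords 0 and 1
  have hE : e v = mN (e ![1,0,0]) (e ![1,0,0]) := by
    have := he ![1,0,0] ![1,0,0]
    have h1 : mP ![1,0,0] ![1,0,0] = v := by
      funext i; fin_cases i <;> simp [mP, hv]
    rwa [h1] at this
  have hc0 : c ≠ 0 := by
    intro h0
    have hEz : e v = 0 := by
      funext i
      fin_cases i
      · rw [hE]; simp [mN]
      · rw [hE]; simp [mN]
      · exact h0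
    have h4 : v = 0 := e.injective (by rw [hEz, map_zero])
    have h5 := congrFun h4 2
    simp [hv] at h5
  set p : Fin 3 → ℝ := e ![1,0,0] with hp
  set q : Fin 3 → ℝ := e ![0,1,0] with hq
  set α : ℝ := p 0 - p 1 with hα
  set β : ℝ := q 0 - q 1 with hβ
  -- consider x = β•e0 - α•e1
  have hx : ∀ x : Fin 3 → ℝ, x = β • ![1,0,0] - α • ![(0:ℝ),1,0] →
      e x 0 = β * p 0 - α * q 0 ∧ e x 1 = β * p 1 - α * q 1 := by
    intro x hxdef
    subst hxdef
    rw [map_sub, map_smul, map_smul]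
    constructor <;> simp [← hp, ← hq]
  obtain ⟨h0, h1⟩ := hx _ rfl
  have hkx := key (β • ![1,0,0] - α • ![(0:ℝ),1,0])
  rw [h0, h1] at hkx
  have hcoord : (β • ![(1:ℝ),0,0] - α • ![(0:ℝ),1,0]) 0 = β ∧
      (β • ![(1:ℝ),0,0] - α • ![(0:ℝ),1,0]) 1 = -α := by
    constructor <;> simp
  rw [hcoord.1, hcoord.2] at hkx
  -- LHS is zero since (βp₀-αq₀) ± : difference of squares with equal diagonals
  have heq : β * p 0 - α * q 0 = β * p 1 - α * q 1 := by rw [hα, hβ]; ring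
  rw [heq] at hkx
  have hsum : β ^ 2 + α ^ 2 = 0 := by
    have : (β ^ 2 + (-α) ^ 2) * c = 0 := by linarith
    rcases mul_eq_zero.mp this with h | h
    · nlinarith
    · exact absurd h hc0
  have hα0 : α = 0 := by nlinarith [sq_nonneg α, sq_nonneg β]
  have hk0 := key ![1,0,0]
  rw [← hp] at hk0
  have hpp : p 0 = p 1 := by rw [hα] at hα0; linarith
  rw [hpp] at hk0
  simp at hk0
  exact hc0 (by linarith)
end

section
/- Over the real field ℝ, the 4-dimensional Jordan algebras with a² = d, b² = d, c² = d and with a² = d, b² = d, c² = −d (all other basis products zero) are not isomorphic. -/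
/-- 4-dim real algebra: `a² = d`, `b² = d`, `c² = d`. -/
def m4P : (Fin 4 → ℝ) → (Fin 4 → ℝ) → (Fin 4 → ℝ) :=
  fun x y => ![0, 0, 0, x 0 * y 0 + x 1 * y 1 + x 2 * y 2]

/-- 4-dim real algebra: `a² = d`, `b² = d`, `c² = -d`. -/
def m4N : (Fin 4 → ℝ) → (Fin 4 → ℝ) → (Fin 4 → ℝ) :=
  fun x y => ![0, 0, 0, x 0 * y 0 + x 1 * y 1 - x 2 * y 2]

section

variable {K : Type*} [Field K] {M N : Type*} [AddCommGroup M] [Module K M]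
  [AddCommGroup N] [Module K N]

theorem isJordanAlg_of_mul_mul_eq_zero {mul : M → M → M} (hbilin : IsBilin K mul)
    (hcomm : ∀ x y, mul x y = mul y x) (hzero : ∀ x y z, mul (mul x y) z = 0) :
    IsJordanAlg K mul := by
  refine ⟨hbilin, hcomm, fun x y => ?_⟩
  rw [hzero, hcomm x, hzero]

def SquareZeroAnnihilates (mul : M → M → M) : Prop :=
  ∀ x, mul x x = 0 → ∀ y, mul x y = 0

theorem SquareZeroAnnihilates.of_jIso {mul1 : M → M → M} {mul2 : N → N → N}
    (h : SquareZeroAnnihilates mul1) (hiso : JIso K mul1 mul2) :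
    SquareZeroAnnihilates mul2 := by
  obtain ⟨e, he⟩ := hiso
  intro x hx y
  have hsq : mul1 (e.symm x) (e.symm x) = 0 := e.injective <| by simpa [he] using hx
  simpa [he] using congrArg e (h _ hsq (e.symm y))

end

theorem isJordanAlg_m4P : IsJordanAlg ℝ m4P := by
  refine isJordanAlg_of_mul_mul_eq_zero ⟨?_, ?_, ?_, ?_⟩ ?_ ?_ <;>
    intros <;> funext j <;> fin_cases j <;> simp [m4P] <;> ring

theorem isJordanAlg_m4N : IsJordanAlg ℝ m4N := by
  refine isJordanAlg_of_mul_mul_eq_zero ⟨?_, ?_, ?_, ?_⟩ ?_ ?_ <;>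
    intros <;> funext j <;> fin_cases j <;> simp [m4N] <;> ring

theorem squareZeroAnnihilates_m4P : SquareZeroAnnihilates m4P := by
  intro x hx y
  have hsum : x 0 * x 0 + x 1 * x 1 + x 2 * x 2 = 0 := by simpa [m4P] using congrFun hx 3
  have h0 : x 0 = 0 := by nlinarith
  have h1 : x 1 = 0 := by nlinarith
  have h2 : x 2 = 0 := by nlinarith
  simp [m4P, h0, h1, h2]

theorem not_squareZeroAnnihilates_m4N : ¬ SquareZeroAnnihilates m4N := by
  intro h
  have hsq : m4N ![1, 0, 1, 0] ![1, 0, 1, 0] = 0 := by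
    funext j; fin_cases j <;> simp [m4N]
  simpa [m4N] using congrFun (h _ hsq ![1, 0, 0, 0]) 3

/-- over ℝ the Jordan algebras with `a²=b²=c²=d` and with
`a²=b²=d, c²=-d` are not isomorphic. -/
theorem stmt18 :
    IsJordanAlg ℝ m4P ∧ IsJordanAlg ℝ m4N ∧ ¬ JIso ℝ m4P m4N :=
  ⟨isJordanAlg_m4P, isJordanAlg_m4N,
    fun hiso => not_squareZeroAnnihilates_m4N (squareZeroAnnihilates_m4P.of_jIso hiso)⟩
end
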